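/- arXiv:2210.16976 — 2 statements merged into one kernel-verified Lean document; each statement's English description precedes it below -/
import Mathlib

section
/- Let S and A be finite nonempty sets, let d, n ≥ 1 be integers and λ > 0, B > 0, ζ ≥ 0 reals. Let P : S×A → Δ(S) be a probability transition. Let φ̂ : S×A → ℝ^d with ‖φ̂(s,a)‖₂ ≤ 1 and ŵ : S → ℝ^d be such that P̂(s′|s,a) := ⟨φ̂(s,a), ŵ(s′)⟩ satisfies P̂(s′|s,a) ≥ 0 and Σ_{s′} P̂(s′|s,a) ≤ 1 for all (s,a), and ‖Σ_{s′∈S} ŵ(s′)·l(s′)‖₂ ≤ √d for every l : S → [0,1]. Fix g : S×A → [0,B] and define f_g(s) := (1/|A|)·Σ_{a∈A} g(s,a). Let μ be a distribution on S×A with Σ_{(s̃,ã)} μ(s̃,ã)·( Σ_{s∈S} (P̂(s|s̃,ã) − P(s|s̃,ã))·f_g(s) )² ≤ ζ. Set Σ̂_μ := n·Σ_{(s,a)} μ(s,a)·φ̂(s,a)φ̂(s,a)ᵀ + λ·I_d and define ν on S×A by ν(s,a) := (1/|A|)·Σ_{(s̃,ã)} μ(s̃,ã)·P(s|s̃,ã).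 Let q′ be any distribution on S×A, π : S → Δ(A) a policy, and q(s,a) := Σ_{(s̃,ã)} q′(s̃,ã)·P̂(s|s̃,ã)·π(a|s). Then: Σ_{(s,a)} q(s,a)·g(s,a) ≤ E_{(s̃,ã)∼q′}[ min{ ‖φ̂(s̃,ã)‖_{Σ̂_μ^{-1}} · √( 2n·|A|²·E_{(s,a)∼ν}[g(s,a)²] + B²·λ·d + 2n·|A|²·ζ ), B } ]. -/
/-!
Put `h(s) = Σ_a π(a|s) g(s,a) ∈ [0,B]` and `w = Σ_s ŵ(s) h(s)`, so that `P̂h = ⟨φ̂, w⟩` and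
`Σ q g = E_{q'}[⟨φ̂, w⟩]`. Pointwise, `⟨φ̂, w⟩ ≤ B` because `P̂` is sub-stochastic, and
`⟨φ̂, w⟩ ≤ ‖φ̂‖_{Σ̂⁻¹} ‖w‖_{Σ̂}` by Cauchy–Schwarz. Moreover
`‖w‖²_{Σ̂} = n E_μ[(P̂h)²] + λ‖w‖²` with `‖w‖ ≤ B√d`, and since `h ≤ |A| f_g`,
`(P̂h)² ≤ 2|A|² ((P f_g)² + ((P̂ - P) f_g)²)`. The model-error term is at most `ζ`, and Jensen,
applied once to the rows of `P` and once to the uniform average over actions, bounds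
`E_μ[(P f_g)²]` by `E_ν[g²]`.
-/

open Finset Matrix

/-- Euclidean (ℓ²) norm of a finite-dimensional real vector. -/
noncomputable def l2norm {ι : Type*} [Fintype ι] (x : ι → ℝ) : ℝ :=
  Real.sqrt (∑ i, x i ^ 2)

/-- Matrix-weighted norm ‖x‖_M = √(xᵀ M x). -/
noncomputable def matNorm {ι : Type*} [Fintype ι] (M : Matrix ι ι ℝ) (x : ι → ℝ) : ℝ :=
  Real.sqrt (x ⬝ᵥ M.mulVec x)

section MatrixNorm

variable {ι : Type*} [Fintype ι]

theorem sq_dotProduct_le_mul_inv [DecidableEq ι] {M : Matrix ι ι ℝ} (hM : M.PosDef)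
    (x y : ι → ℝ) : (x ⬝ᵥ y) ^ 2 ≤ (x ⬝ᵥ M⁻¹ *ᵥ x) * (y ⬝ᵥ M *ᵥ y) := by
  set u := M⁻¹ *ᵥ x
  have hMT : Mᵀ = M := by simpa using hM.isHermitian.eq
  have hMu : M *ᵥ u = x := by
    rw [mulVec_mulVec, mul_nonsing_inv _ (isUnit_iff_ne_zero.2 hM.det_pos.ne'), one_mulVec]
  have hu : ∀ v, u ⬝ᵥ M *ᵥ v = x ⬝ᵥ v := fun v => by
    rw [dotProduct_mulVec, ← mulVec_transpose, hMT, hMu]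
  have hCS := (toBilin' M).apply_sq_le_of_symm
    (fun v => (toBilin'_apply' M v v).symm ▸ by
      simpa using hM.posSemidef.dotProduct_mulVec_nonneg v)
    (LinearMap.BilinForm.isSymm_iff.1 ((isSymm_toBilin'_iff_isSymm (M := M)).2 hMT)) u y
  rwa [toBilin'_apply', toBilin'_apply', toBilin'_apply', hu, hu] at hCS

theorem dotProduct_le_matNorm_inv_mul_matNorm [DecidableEq ι] {M : Matrix ι ι ℝ}
    (hM : M.PosDef) (x y : ι → ℝ) : x ⬝ᵥ y ≤ matNorm M⁻¹ x * matNorm M y := by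
  have hx : 0 ≤ x ⬝ᵥ M⁻¹ *ᵥ x := by simpa using hM.inv.posSemidef.dotProduct_mulVec_nonneg x
  rw [matNorm, matNorm, ← Real.sqrt_mul hx]
  exact Real.le_sqrt_of_sq_le (sq_dotProduct_le_mul_inv hM x y)

variable {κ : Type*} [Fintype κ] [DecidableEq ι]

theorem posDef_smul_sum_vecMulVec_add_smul_one {c lam : ℝ} (hc : 0 ≤ c) (hlam : 0 < lam)
    {μ : κ → ℝ} (hμ : ∀ p, 0 ≤ μ p) (φ : κ → ι → ℝ) :
    (c • ∑ p, μ p • vecMulVec (φ p) (φ p) + lam • (1 : Matrix ι ι ℝ)).PosDef := by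
  refine PosDef.posSemidef_add (PosSemidef.smul ?_ hc) (PosDef.smul PosDef.one hlam)
  exact posSemidef_sum _ fun p _ => (posSemidef_vecMulVec_self_star (φ p)).smul (hμ p)

theorem dotProduct_smul_sum_vecMulVec_add_smul_one_mulVec (c lam : ℝ) (μ : κ → ℝ)
    (φ : κ → ι → ℝ) (v : ι → ℝ) :
    v ⬝ᵥ (c • ∑ p, μ p • vecMulVec (φ p) (φ p) + lam • (1 : Matrix ι ι ℝ)) *ᵥ v
      = c * ∑ p, μ p * (φ p ⬝ᵥ v) ^ 2 + lam * ∑ j, v j ^ 2 := by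
  simp only [add_mulVec, smul_mulVec, sum_mulVec, vecMulVec_mulVec, op_smul_eq_smul,
    one_mulVec, dotProduct_add, dotProduct_smul, dotProduct_sum, smul_eq_mul]
  congr 2
  · refine sum_congr rfl fun p _ => ?_
    rw [dotProduct_comm v]
    ring
  · simp only [dotProduct, sq]

end MatrixNorm

section Probability

variable {ι : Type*} [Fintype ι]

theorem sq_sum_mul_le_sum_mul_sq {w : ι → ℝ} (hw : ∀ i, 0 ≤ w i) (hw1 : ∑ i, w i ≤ 1)
    (f : ι → ℝ) : (∑ i, w i * f i) ^ 2 ≤ ∑ i, w i * f i ^ 2 := by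
  have hwf : 0 ≤ ∑ i, w i * f i ^ 2 := sum_nonneg fun i _ => mul_nonneg (hw i) (sq_nonneg _)
  calc (∑ i, w i * f i) ^ 2 ≤ (∑ i, w i) * ∑ i, w i * f i ^ 2 :=
        sum_sq_le_sum_mul_sum_of_sq_le_mul _ (fun i _ => hw i)
          (fun i _ => mul_nonneg (hw i) (sq_nonneg _)) fun i _ => le_of_eq (by ring)
    _ ≤ ∑ i, w i * f i ^ 2 := mul_le_of_le_one_left hwf hw1

theorem sum_mul_le_of_sum_le_one {w f : ι → ℝ} {B : ℝ} (hw : ∀ i, 0 ≤ w i) (hw1 : ∑ i, w i ≤ 1)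
    (hf : ∀ i, f i ≤ B) (hB : 0 ≤ B) : ∑ i, w i * f i ≤ B :=
  calc ∑ i, w i * f i ≤ ∑ i, w i * B :=
        sum_le_sum fun i _ => mul_le_mul_of_nonneg_left (hf i) (hw i)
    _ = (∑ i, w i) * B := (sum_mul _ _ _).symm
    _ ≤ B := mul_le_of_le_one_left hB hw1

end Probability

section LowRankModel

variable {S A : Type*} [Fintype S] [Fintype A]

theorem sum_mul_eq_dotProduct_sum_mul {ι : Type*} [Fintype ι] {r : S → ℝ} {φ : ι → ℝ}
    {ψ : S → ι → ℝ} (hr : ∀ s, r s = ∑ j, φ j * ψ s j) (h : S → ℝ) :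
    ∑ s, r s * h s = φ ⬝ᵥ fun j => ∑ s, ψ s j * h s := by
  simp only [hr, dotProduct, sum_mul, mul_sum]
  rw [sum_comm]
  exact sum_congr rfl fun j _ => sum_congr rfl fun s _ => by ring

theorem sum_occupancy_mul_eq {κ : Type*} [Fintype κ] (q' : κ → ℝ) (Phat : κ → S → ℝ)
    (pol : S → A → ℝ) (g : S × A → ℝ) {q : S × A → ℝ}
    (hq : ∀ p : S × A, q p = ∑ p', q' p' * Phat p' p.1 * pol p.1 p.2) :
    ∑ p, q p * g p = ∑ p', q' p' * ∑ s, Phat p' s * ∑ a, pol s a * g (s, a) := by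
  simp only [hq, sum_mul, mul_sum, Fintype.sum_prod_type]
  rw [sum_comm_cycle]
  exact sum_congr rfl fun p' _ => sum_congr rfl fun s _ => sum_congr rfl fun a _ => by ring

theorem sum_sq_sum_mul_le_of_l2norm_le {ι : Type*} [Fintype ι] {ψ : S → ι → ℝ} {c : ℝ}
    (hc : 0 ≤ c)
    (hψ : ∀ l : S → ℝ, (∀ s, l s ∈ Set.Icc (0 : ℝ) 1) →
      l2norm (fun j => ∑ s, ψ s j * l s) ≤ Real.sqrt c)
    {B : ℝ} (hB : 0 < B) {h : S → ℝ} (hh : ∀ s, h s ∈ Set.Icc 0 B) :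
    ∑ j, (∑ s, ψ s j * h s) ^ 2 ≤ B ^ 2 * c := by
  have hscaled := hψ (fun s => h s / B) fun s =>
    ⟨div_nonneg (hh s).1 hB.le, (div_le_one hB).2 (hh s).2⟩
  rw [l2norm, Real.sqrt_le_sqrt_iff hc] at hscaled
  simp only [← mul_div_assoc, ← sum_div, div_pow] at hscaled
  rwa [div_le_iff₀ (by positivity), mul_comm] at hscaled

theorem sum_mul_le_card_mul_mean [Nonempty A] {π g : A → ℝ} (hπ : ∀ a, 0 ≤ π a)
    (hπ1 : ∑ a, π a = 1) (hg : ∀ a, 0 ≤ g a) :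
    ∑ a, π a * g a ≤ Fintype.card A * (1 / Fintype.card A * ∑ a, g a) := by
  rw [← mul_assoc, mul_one_div_cancel (by positivity), one_mul]
  refine sum_le_sum fun a _ => mul_le_of_le_one_left (hg a) ?_
  exact hπ1 ▸ single_le_sum (fun b _ => hπ b) (mem_univ a)

theorem sum_mul_sq_sum_mul_mean_le {κ : Type*} [Fintype κ] {μ : κ → ℝ} (hμ : ∀ p, 0 ≤ μ p)
    {P : κ → S → ℝ} (hP : ∀ p s, 0 ≤ P p s) (hP1 : ∀ p, ∑ s, P p s = 1)
    {g : S × A → ℝ} {fg : S → ℝ} (hfg : ∀ s, fg s = 1 / Fintype.card A * ∑ a, g (s, a))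
    {ν : S × A → ℝ} (hν : ∀ p : S × A, ν p = 1 / Fintype.card A * ∑ p', μ p' * P p' p.1) :
    ∑ p, μ p * (∑ s, P p s * fg s) ^ 2 ≤ ∑ p, ν p * g p ^ 2 := by
  have hfg_sq : ∀ s, fg s ^ 2 ≤ 1 / Fintype.card A * ∑ a, g (s, a) ^ 2 := fun s => by
    simpa only [hfg, one_div_mul_eq_div, card_univ] using
      sum_div_card_sq_le_sum_sq_div_card (s := univ) (f := fun a => g (s, a))
  calc ∑ p, μ p * (∑ s, P p s * fg s) ^ 2 ≤ ∑ p, μ p * ∑ s, P p s * fg s ^ 2 := by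
        gcongr with p
        exacts [hμ p, sq_sum_mul_le_sum_mul_sq (hP p) (hP1 p).le fg]
    _ = ∑ s, (∑ p, μ p * P p s) * fg s ^ 2 := by
        simp only [mul_sum, sum_mul]
        rw [sum_comm]
        exact sum_congr rfl fun s _ => sum_congr rfl fun p _ => by ring
    _ ≤ ∑ s, (∑ p, μ p * P p s) * (1 / Fintype.card A * ∑ a, g (s, a) ^ 2) := by
        gcongr with s
        exacts [sum_nonneg fun p _ => mul_nonneg (hμ p) (hP p s), hfg_sq s]
    _ = ∑ p, ν p * g p ^ 2 := by
        simp only [Fintype.sum_prod_type, hν]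
        refine sum_congr rfl fun s _ => ?_
        rw [mul_sum, mul_sum]
        exact sum_congr rfl fun a _ => by ring

theorem sq_sum_mul_le_two_mul_sq_add_sq {r P f h : S → ℝ} {c : ℝ} (hr : ∀ s, 0 ≤ r s)
    (hh0 : ∀ s, 0 ≤ h s) (hh : ∀ s, h s ≤ c * f s) :
    (∑ s, r s * h s) ^ 2
      ≤ 2 * c ^ 2 * ((∑ s, P s * f s) ^ 2 + (∑ s, (r s - P s) * f s) ^ 2) := by
  have hle : ∑ s, r s * h s ≤ c * (∑ s, P s * f s + ∑ s, (r s - P s) * f s) :=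
    calc ∑ s, r s * h s ≤ ∑ s, r s * (c * f s) := by
          gcongr with s
          exacts [hr s, hh s]
      _ = c * (∑ s, P s * f s + ∑ s, (r s - P s) * f s) := by
          rw [← sum_add_distrib, mul_sum]
          exact sum_congr rfl fun s _ => by ring
  calc (∑ s, r s * h s) ^ 2 ≤ (c * (∑ s, P s * f s + ∑ s, (r s - P s) * f s)) ^ 2 :=
        pow_le_pow_left₀ (sum_nonneg fun s _ => mul_nonneg (hr s) (hh0 s)) hle 2
    _ ≤ c ^ 2 * (2 * ((∑ s, P s * f s) ^ 2 + (∑ s, (r s - P s) * f s) ^ 2)) := by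
        rw [mul_pow]
        gcongr
        exact add_sq_le
    _ = _ := by ring

theorem sum_mul_sq_sum_mul_le_of_model_error {κ : Type*} [Fintype κ] {μ : κ → ℝ} (hμ : ∀ p, 0 ≤ μ p)
    {P Phat : κ → S → ℝ} (hP : ∀ p s, 0 ≤ P p s) (hP1 : ∀ p, ∑ s, P p s = 1)
    (hPhat : ∀ p s, 0 ≤ Phat p s)
    {g : S × A → ℝ} {fg : S → ℝ} (hfg : ∀ s, fg s = 1 / Fintype.card A * ∑ a, g (s, a))
    {ν : S × A → ℝ} (hν : ∀ p : S × A, ν p = 1 / Fintype.card A * ∑ p', μ p' * P p' p.1)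
    {ζ : ℝ} (hμerr : ∑ p, μ p * (∑ s, (Phat p s - P p s) * fg s) ^ 2 ≤ ζ)
    {h : S → ℝ} (hh0 : ∀ s, 0 ≤ h s) (hh : ∀ s, h s ≤ Fintype.card A * fg s) :
    ∑ p, μ p * (∑ s, Phat p s * h s) ^ 2
      ≤ 2 * (Fintype.card A : ℝ) ^ 2 * ∑ p, ν p * g p ^ 2
        + 2 * (Fintype.card A : ℝ) ^ 2 * ζ := by
  set k : ℝ := (Fintype.card A : ℝ)
  calc ∑ p, μ p * (∑ s, Phat p s * h s) ^ 2
      ≤ ∑ p, μ p * (2 * k ^ 2 * ((∑ s, P p s * fg s) ^ 2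
          + (∑ s, (Phat p s - P p s) * fg s) ^ 2)) := by
        gcongr with p
        exacts [hμ p, sq_sum_mul_le_two_mul_sq_add_sq (hPhat p) hh0 hh]
    _ = 2 * k ^ 2 * ∑ p, μ p * (∑ s, P p s * fg s) ^ 2
          + 2 * k ^ 2 * ∑ p, μ p * (∑ s, (Phat p s - P p s) * fg s) ^ 2 := by
        simp only [mul_sum, ← sum_add_distrib]
        exact sum_congr rfl fun p _ => by ring
    _ ≤ _ := by
        gcongr
        exact sum_mul_sq_sum_mul_mean_le hμ hP hP1 hfg hν

end LowRankModel

theorem one_step_back_model_free_general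
    {S A : Type*} [Fintype S] [Fintype A] [Nonempty A]
    {d n : ℕ}
    {lam B ζ : ℝ} (hlam : 0 < lam) (hB : 0 < B)
    (P : S × A → S → ℝ) (hPpos : ∀ p s', 0 ≤ P p s') (hPsum : ∀ p, ∑ s', P p s' = 1)
    (φhat : S × A → Fin d → ℝ)
    (what : S → Fin d → ℝ)
    (Phat : S × A → S → ℝ) (hPhat : ∀ p s', Phat p s' = ∑ j, φhat p j * what s' j)
    (hPhatpos : ∀ p s', 0 ≤ Phat p s') (hPhatsum : ∀ p, ∑ s', Phat p s' ≤ 1)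
    (hwhat : ∀ l : S → ℝ, (∀ s', l s' ∈ Set.Icc (0 : ℝ) 1) →
      l2norm (fun j => ∑ s', what s' j * l s') ≤ Real.sqrt d)
    (g : S × A → ℝ) (hg : ∀ p, g p ∈ Set.Icc (0 : ℝ) B)
    (fg : S → ℝ) (hfg : ∀ s, fg s = (1 / (Fintype.card A : ℝ)) * ∑ a, g (s, a))
    (μ : S × A → ℝ) (hμpos : ∀ p, 0 ≤ μ p)
    (hμerr : ∑ p, μ p * (∑ s', (Phat p s' - P p s') * fg s') ^ 2 ≤ ζ)
    (Sighat : Matrix (Fin d) (Fin d) ℝ)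
    (hSighat : Sighat = (n : ℝ) • (∑ p, μ p • vecMulVec (φhat p) (φhat p)) +
      lam • (1 : Matrix (Fin d) (Fin d) ℝ))
    (ν : S × A → ℝ)
    (hν : ∀ p : S × A, ν p = (1 / (Fintype.card A : ℝ)) * ∑ p', μ p' * P p' p.1)
    (q' : S × A → ℝ) (hq'pos : ∀ p, 0 ≤ q' p)
    (pol : S → A → ℝ) (hpolpos : ∀ s a, 0 ≤ pol s a) (hpolsum : ∀ s, ∑ a, pol s a = 1)
    (q : S × A → ℝ)
    (hq : ∀ p : S × A, q p = ∑ p', q' p' * Phat p' p.1 * pol p.1 p.2) :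
    (∑ p, q p * g p) ≤
      ∑ p, q' p *
        min (matNorm Sighat⁻¹ (φhat p) *
          Real.sqrt (2 * (n : ℝ) * (Fintype.card A : ℝ) ^ 2 * (∑ p', ν p' * g p' ^ 2)
            + B ^ 2 * lam * d + 2 * (n : ℝ) * (Fintype.card A : ℝ) ^ 2 * ζ)) B := by
  set h : S → ℝ := fun s => ∑ a, pol s a * g (s, a)
  set w : Fin d → ℝ := fun j => ∑ s, what s j * h s
  have hh : ∀ s, h s ∈ Set.Icc 0 B := fun s =>
    ⟨sum_nonneg fun a _ => mul_nonneg (hpolpos s a) (hg _).1,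
      sum_mul_le_of_sum_le_one (hpolpos s) (hpolsum s).le (fun a => (hg _).2) hB.le⟩
  have hbackup : ∀ p, ∑ s, Phat p s * h s = φhat p ⬝ᵥ w :=
    fun p => sum_mul_eq_dotProduct_sum_mul (hPhat p) h
  have hSigma : Sighat.PosDef :=
    hSighat ▸ posDef_smul_sum_vecMulVec_add_smul_one (Nat.cast_nonneg n) hlam hμpos φhat
  have hfit := sum_mul_sq_sum_mul_le_of_model_error hμpos hPpos hPsum hPhatpos hfg hν hμerr
    (fun s => (hh s).1) fun s =>
      hfg s ▸ sum_mul_le_card_mul_mean (hpolpos s) (hpolsum s) fun a => (hg (s, a)).1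
  have hw := sum_sq_sum_mul_le_of_l2norm_le (Nat.cast_nonneg d) hwhat hB hh
  have hwSigma : matNorm Sighat w ≤ Real.sqrt (2 * (n : ℝ) * (Fintype.card A : ℝ) ^ 2 *
      (∑ p', ν p' * g p' ^ 2) + B ^ 2 * lam * d + 2 * (n : ℝ) * (Fintype.card A : ℝ) ^ 2 * ζ) := by
    rw [matNorm, hSighat, dotProduct_smul_sum_vecMulVec_add_smul_one_mulVec]
    simp only [hbackup] at hfit
    apply Real.sqrt_le_sqrt
    linarith [mul_le_mul_of_nonneg_left hfit (Nat.cast_nonneg n : (0 : ℝ) ≤ n),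
      mul_le_mul_of_nonneg_left hw hlam.le]
  rw [sum_occupancy_mul_eq q' Phat pol g hq]
  refine sum_le_sum fun p _ => mul_le_mul_of_nonneg_left (le_min ?_ ?_) (hq'pos p)
  · rw [hbackup p]
    exact (dotProduct_le_matNorm_inv_mul_matNorm hSigma _ _).trans
      (mul_le_mul_of_nonneg_left hwSigma (Real.sqrt_nonneg _))
  · exact sum_mul_le_of_sum_le_one (hPhatpos p) (hPhatsum p) (fun s => (hh s).2) hB.le

/-- Model-free one-step back inequality for the learned low-rank transition model. -/
theorem one_step_back_model_free
    {S A : Type*} [Fintype S] [Nonempty S] [Fintype A] [Nonempty A]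
    {d n : ℕ} (hd : 1 ≤ d) (hn : 1 ≤ n)
    {lam B ζ : ℝ} (hlam : 0 < lam) (hB : 0 < B) (hζ : 0 ≤ ζ)
    (P : S × A → S → ℝ) (hPpos : ∀ p s', 0 ≤ P p s') (hPsum : ∀ p, ∑ s', P p s' = 1)
    (φhat : S × A → Fin d → ℝ) (hφhat : ∀ p, l2norm (φhat p) ≤ 1)
    (what : S → Fin d → ℝ)
    (Phat : S × A → S → ℝ) (hPhat : ∀ p s', Phat p s' = ∑ j, φhat p j * what s' j)
    (hPhatpos : ∀ p s', 0 ≤ Phat p s') (hPhatsum : ∀ p, ∑ s', Phat p s' ≤ 1)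
    (hwhat : ∀ l : S → ℝ, (∀ s', l s' ∈ Set.Icc (0 : ℝ) 1) →
      l2norm (fun j => ∑ s', what s' j * l s') ≤ Real.sqrt d)
    (g : S × A → ℝ) (hg : ∀ p, g p ∈ Set.Icc (0 : ℝ) B)
    (fg : S → ℝ) (hfg : ∀ s, fg s = (1 / (Fintype.card A : ℝ)) * ∑ a, g (s, a))
    (μ : S × A → ℝ) (hμpos : ∀ p, 0 ≤ μ p) (hμsum : ∑ p, μ p = 1)
    (hμerr : ∑ p, μ p * (∑ s', (Phat p s' - P p s') * fg s') ^ 2 ≤ ζ)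
    (Sighat : Matrix (Fin d) (Fin d) ℝ)
    (hSighat : Sighat = (n : ℝ) • (∑ p, μ p • vecMulVec (φhat p) (φhat p)) +
      lam • (1 : Matrix (Fin d) (Fin d) ℝ))
    (ν : S × A → ℝ)
    (hν : ∀ p : S × A, ν p = (1 / (Fintype.card A : ℝ)) * ∑ p', μ p' * P p' p.1)
    (q' : S × A → ℝ) (hq'pos : ∀ p, 0 ≤ q' p) (hq'sum : ∑ p, q' p = 1)
    (pol : S → A → ℝ) (hpolpos : ∀ s a, 0 ≤ pol s a) (hpolsum : ∀ s, ∑ a, pol s a = 1)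
    (q : S × A → ℝ)
    (hq : ∀ p : S × A, q p = ∑ p', q' p' * Phat p' p.1 * pol p.1 p.2) :
    (∑ p, q p * g p) ≤
      ∑ p, q' p *
        min (matNorm Sighat⁻¹ (φhat p) *
          Real.sqrt (2 * (n : ℝ) * (Fintype.card A : ℝ) ^ 2 * (∑ p', ν p' * g p' ^ 2)
            + B ^ 2 * lam * d + 2 * (n : ℝ) * (Fintype.card A : ℝ) ^ 2 * ζ)) B :=
  one_step_back_model_free_general hlam hB P hPpos hPsum φhat what Phat hPhat hPhatpos hPhatsum
    hwhat g hg fg hfg μ hμpos hμerr Sighat hSighat ν hν q' hq'pos pol hpolpos hpolsum q hq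
end

section
/- Let M ≥ 1, let S_1,…,S_M and A_1,…,A_M be finite nonempty sets, S := S_1×⋯×S_M, A := A_1×⋯×A_M, and for T ⊆ {1,…,M} write s[T] := (s_j)_{j∈T} and S[T] := Π_{j∈T} S_j. Let d, n ≥ 1, λ > 0, B > 0. For each j ∈ {1,…,M} let Z_j ⊆ {1,…,M}, let φ_j : S[Z_j]×A_j → ℝ^d with ‖φ_j(·)‖₂ ≤ 1, and let w_j : S_j → ℝ^d be such that P_j(s′_j | s[Z_j], a_j) := ⟨φ_j(s[Z_j],a_j), w_j(s′_j)⟩ is a probability distribution over s′_j ∈ S_j for every (s[Z_j],a_j). Define the factored transition P(s′|s,a) := Π_{j=1}^M P_j(s′_j | s[Z_j], a_j). Fix a player i and assume that for every G : S[Z_i] → [0,1] one has ‖ Σ_{z∈S[Z_i]} (⊗_{j∈Z_i} w_j(z_j))·G(z) ‖₂ ≤ √(d^{|Z_i|}), where ⊗ denotes the Kronecker product taken over j ∈ Z_i in a fixed order. Define φ̄_i(s,a) := ⊗_{j∈Z_i} φ_j(s[Z_j], a_j) ∈ ℝ^{d^{|Z_i|}}. Let μ be a distribution on S×A, set Σ̄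 := n·Σ_{(s,a)} μ(s,a)·φ̄_i(s,a)φ̄_i(s,a)ᵀ + λ·I_{d^{|Z_i|}}, and define ν on S×A by ν(s,a) := (1/|A|)·Σ_{(s̃,ã)} μ(s̃,ã)·P(s|s̃,ã). Let q′ be any distribution on S×A, π : S → Δ(A) a policy, and q(s,a) := Σ_{(s̃,ã)} q′(s̃,ã)·P(s|s̃,ã)·π(a|s). Then for every g : S[Z_i]×A_i → [0,B]: E_{(s,a)∼q}[ g(s[Z_i], a_i) ] ≤ |A_i| · E_{(s̃,ã)∼q′}[ ‖φ̄_i(s̃,ã)‖_{Σ̄^{-1}} ] · √( n·E_{(s,a)∼ν}[ g(s[Z_i],a_i)² ] + B²·λ·d^{|Z_i|} ). -/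
/-!
Since the factors outside `Z i` sum to one, the marginal of `P (s̃, ã)` on `S[Z i]` is the
product of the low-rank factors of the players in `Z i`; hence
`E_{s ∼ P (s̃, ã)} h (s[Z i]) = ⟨φ̄ (s̃, ã), W h⟩` with `W h = ∑ z, h z • ⊗ⱼ w j (z j)`.
Bounding the policy by the sum over `b ∈ A i`, the left side is at most
`E_{q'} ∑ b, ⟨φ̄, W b⟩` with `W b = W (g (·, b))`, and Cauchy–Schwarz in the geometry of `Σ̄`
bounds this by `E_{q'} ‖φ̄‖_{Σ̄⁻¹} * ∑ b, ‖W b‖_Σ̄`. Finally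
`‖W b‖²_Σ̄ = n E_μ ⟨φ̄, W b⟩² + λ ‖W b‖²`: Jensen bounds the first term by
`n E_{μP} g(·, b)²`, the normalization hypothesis bounds `‖W b‖²` by `B² d^|Z i|`, and summing
over `b` turns `E_{μP}` into `|A i|` times the expectation under `ν`.
-/

open Finset Matrix

section Elementary

variable {α β : Type*}

theorem sq_sum_mul_le_sum_mul_sq_s3 (s : Finset α) {p : α → ℝ} (hp : ∀ a ∈ s, 0 ≤ p a)
    (hp1 : ∑ a ∈ s, p a = 1) (x : α → ℝ) :
    (∑ a ∈ s, p a * x a) ^ 2 ≤ ∑ a ∈ s, p a * x a ^ 2 := by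
  simpa [hp1] using sum_sq_le_sum_mul_sum_of_sq_le_mul s hp
    (fun a ha => mul_nonneg (hp a ha) (sq_nonneg (x a))) fun a _ => le_of_eq (by ring)

variable [Fintype α] [Fintype β]

theorem sum_le_card_mul_sqrt_of_sum_sq_le (x : α → ℝ) {D : ℝ}
    (h : ∑ a, x a ^ 2 ≤ Fintype.card α * D) : ∑ a, x a ≤ Fintype.card α * √D := by
  have hsq : (∑ a, x a) ^ 2 ≤ (Fintype.card α : ℝ) ^ 2 * D :=
    calc (∑ a, x a) ^ 2 ≤ Fintype.card α * ∑ a, x a ^ 2 := by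
          simpa using sq_sum_le_card_mul_sum_sq (s := univ) (f := x)
      _ ≤ Fintype.card α * (Fintype.card α * D) := by gcongr
      _ = (Fintype.card α : ℝ) ^ 2 * D := by ring
  calc ∑ a, x a ≤ |∑ a, x a| := le_abs_self _
    _ ≤ √((Fintype.card α : ℝ) ^ 2 * D) := Real.abs_le_sqrt hsq
    _ = Fintype.card α * √D := by
        rw [Real.sqrt_mul (sq_nonneg _), Real.sqrt_sq (Nat.cast_nonneg _)]

theorem sum_mul_comp_le_sum {π : α → ℝ} (hπ : ∀ a, 0 ≤ π a) (hπ1 : ∑ a, π a = 1) (f : α → β)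
    {F : β → ℝ} (hF : ∀ b, 0 ≤ F b) : ∑ a, π a * F (f a) ≤ ∑ b, F b :=
  calc ∑ a, π a * F (f a) ≤ ∑ a, π a * ∑ b, F b := by
        gcongr with a
        · exact hπ a
        · exact single_le_sum (fun b _ => hF b) (mem_univ _)
    _ = ∑ b, F b := by rw [← sum_mul, hπ1, one_mul]

theorem sum_next_mul_le {X σ : Type*} [Fintype X] [Fintype σ] {q : X → ℝ} (hq : ∀ x, 0 ≤ q x)
    {P : X → σ → ℝ} (hP : ∀ x s, 0 ≤ P x s) {π : σ → α → ℝ} (hπ : ∀ s a, 0 ≤ π s a)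
    (hπ1 : ∀ s, ∑ a, π s a = 1) (f : α → β) {F : σ → β → ℝ} (hF : ∀ s b, 0 ≤ F s b) :
    ∑ p : σ × α, (∑ x, q x * P x p.1 * π p.1 p.2) * F p.1 (f p.2) ≤
      ∑ x, q x * ∑ b, ∑ s, P x s * F s b :=
  calc ∑ p : σ × α, (∑ x, q x * P x p.1 * π p.1 p.2) * F p.1 (f p.2)
      = ∑ x, q x * ∑ s, P x s * ∑ a, π s a * F s (f a) := by
        simp only [Fintype.sum_prod_type, sum_mul, mul_sum, mul_assoc]
        rw [sum_congr rfl fun s _ => sum_comm, sum_comm]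
    _ ≤ ∑ x, q x * ∑ s, P x s * ∑ b, F s b := by
        gcongr with x _ s
        · exact hq x
        · exact hP x s
        · exact sum_mul_comp_le_sum (hπ s) (hπ1 s) f (hF s)
    _ = ∑ x, q x * ∑ b, ∑ s, P x s * F s b := by
        simp only [mul_sum]
        exact sum_congr rfl fun x _ => by rw [sum_comm]

end Elementary

section Uniform

variable {ι : Type*} [Fintype ι] [DecidableEq ι] {A : ι → Type*} [∀ j, Fintype (A j)]

theorem Fintype.sum_comp_eval (i : ι) (F : A i → ℝ) :
    ∑ a : ∀ j, A j, F (a i) = (card (∀ j, A j) / card (A i) : ℝ) * ∑ b, F b := by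
  have hsplit : ∑ a : ∀ j, A j, F (a i) = card (∀ j : {j // j ≠ i}, A j) * ∑ b, F b := by
    trans ∑ p : A i × ∀ j : {j // j ≠ i}, A j, F p.1
    · exact (Equiv.piSplitAt i A).sum_comp fun p => F p.1
    simp only [Fintype.sum_prod_type, sum_const, card_univ, nsmul_eq_mul, mul_sum]
  have hcard : card (∀ j, A j) = card (A i) * card (∀ j : {j // j ≠ i}, A j) := by
    rw [card_congr (Equiv.piSplitAt i A), card_prod]
  rw [hsplit]
  rcases isEmpty_or_nonempty (A i) with hA | hA
  · simp
  · rw [hcard]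
    push_cast
    field_simp

theorem sum_sum_mul_sum_eq_card_mul_sum_mul_comp_eval [∀ j, Nonempty (A j)] {X σ : Type*}
    [Fintype X] [Fintype σ] (μ : X → ℝ) (P : X → σ → ℝ) {ν : σ × (∀ j, A j) → ℝ}
    (hν : ∀ p, ν p = 1 / Fintype.card (∀ j, A j) * ∑ x, μ x * P x p.1) (i : ι)
    (G : σ → A i → ℝ) :
    ∑ b, ∑ x, μ x * ∑ s, P x s * G s b = Fintype.card (A i) * ∑ p, ν p * G p.1 (p.2 i) := by
  have hcancel : (Fintype.card (A i) : ℝ) * (1 / Fintype.card (∀ j, A j)) *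
      (Fintype.card (∀ j, A j) / Fintype.card (A i)) = 1 := by
    field_simp
  simp only [Fintype.sum_prod_type, hν, mul_assoc, ← mul_sum, Fintype.sum_comp_eval i]
  simp only [mul_sum, sum_mul]
  conv_rhs => rw [sum_comm]
  refine sum_congr rfl fun b _ => sum_comm.trans <| sum_congr rfl fun s _ =>
    sum_congr rfl fun x _ => ?_
  linear_combination (μ x * P x s * G s b) * hcancel.symm

end Uniform

section Kronecker

variable {ι : Type*} [Fintype ι] [DecidableEq ι]

def kronProd {κ : ι → Type*} (x : ∀ j, κ j → ℝ) : (∀ j, κ j) → ℝ :=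
  fun k => ∏ j, x j (k j)

theorem prod_dotProduct_eq_kronProd {κ : ι → Type*} [∀ j, Fintype (κ j)] (x y : ∀ j, κ j → ℝ) :
    ∏ j, x j ⬝ᵥ y j = kronProd x ⬝ᵥ kronProd y := by
  simp only [dotProduct, kronProd, Fintype.prod_sum, prod_mul_distrib]

theorem Finset.prod_coe_sort_mul_prod_subtype_notMem {M : Type*} [CommMonoid M] (T : Finset ι)
    (f : ι → M) : (∏ j : T, f j) * ∏ j : {j // j ∉ T}, f j = ∏ j, f j := by
  convert Fintype.prod_subtype_mul_prod_subtype (· ∈ T) f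

variable {σ : ι → Type*} [∀ j, Fintype (σ j)]

theorem sum_prod_mul_comp_restrict (T : Finset ι) (p : ∀ j, σ j → ℝ)
    (hp : ∀ j ∉ T, ∑ x, p j x = 1) (h : (∀ j : T, σ j) → ℝ) :
    ∑ s : ∀ j, σ j, (∏ j, p j (s j)) * h (fun j => s j) =
      ∑ z : ∀ j : T, σ j, (∏ j : T, p j (z j)) * h z := by
  have hout : ∑ y : ∀ j : {j // j ∉ T}, σ j, ∏ j : {j // j ∉ T}, p j (y j) = 1 := by
    rw [← Fintype.prod_sum]
    exact prod_eq_one fun j _ => hp j j.2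
  let F : (∀ j : T, σ j) × (∀ j : {j // j ∉ T}, σ j) → ℝ :=
    fun zy => (∏ j : T, p j (zy.1 j)) * h zy.1 * ∏ j : {j // j ∉ T}, p j (zy.2 j)
  calc ∑ s : ∀ j, σ j, (∏ j, p j (s j)) * h (fun j => s j)
      = ∑ s, F (Equiv.piEquivPiSubtypeProd (· ∈ T) σ s) := by
        refine sum_congr rfl fun s _ => ?_
        simp only [F, Equiv.piEquivPiSubtypeProd_apply,
          ← prod_coe_sort_mul_prod_subtype_notMem T fun j => p j (s j)]
        ring
    _ = ∑ z : ∀ j : T, σ j, (∏ j : T, p j (z j)) * h z := by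
        rw [Equiv.sum_comp, Fintype.sum_prod_type]
        simp only [F, ← mul_sum, hout, mul_one]

theorem sum_prod_mul_comp_restrict_eq_kronProd_dotProduct (T : Finset ι) (p : ∀ j, σ j → ℝ)
    (hp : ∀ j ∉ T, ∑ x, p j x = 1) {κ : T → Type*} [∀ j, Fintype (κ j)]
    (φ : ∀ j : T, κ j → ℝ) (w : ∀ j : T, σ j → κ j → ℝ) (hpw : ∀ (j : T) x, p j x = φ j ⬝ᵥ w j x)
    (h : (∀ j : T, σ j) → ℝ) :
    ∑ s : ∀ j, σ j, (∏ j, p j (s j)) * h (fun j => s j) =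
      kronProd φ ⬝ᵥ fun k => ∑ z, kronProd (fun j => w j (z j)) k * h z := by
  simp only [sum_prod_mul_comp_restrict T p hp h, hpw, prod_dotProduct_eq_kronProd]
  simp only [dotProduct, sum_mul, mul_sum, mul_assoc]
  exact sum_comm

end Kronecker

theorem l2norm_sq {ι : Type*} [Fintype ι] (x : ι → ℝ) : l2norm x ^ 2 = x ⬝ᵥ x := by
  rw [l2norm, Real.sq_sqrt (sum_nonneg fun i _ => sq_nonneg _)]
  simp only [dotProduct, sq]

theorem dotProduct_self_le_of_l2norm_le {α ι : Type*} [Fintype α] [Fintype ι] (v : α → ι → ℝ)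
    {r B : ℝ} (hB : 0 < B)
    (hv : ∀ G : α → ℝ, (∀ z, G z ∈ Set.Icc 0 1) → l2norm (fun k => ∑ z, v z k * G z) ≤ r)
    {g : α → ℝ} (hg : ∀ z, g z ∈ Set.Icc 0 B) :
    (fun k => ∑ z, v z k * g z) ⬝ᵥ (fun k => ∑ z, v z k * g z) ≤ (B * r) ^ 2 := by
  have hG : ∀ z, g z / B ∈ Set.Icc (0 : ℝ) 1 := fun z =>
    ⟨div_nonneg (hg z).1 hB.le, div_le_one_of_le₀ (hg z).2 hB.le⟩
  have hscale : (fun k => ∑ z, v z k * g z) = B • fun k => ∑ z, v z k * (g z / B) := by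
    ext k
    simp only [Pi.smul_apply, smul_eq_mul, mul_sum]
    exact sum_congr rfl fun z _ => by field_simp
  rw [hscale, dotProduct_smul, smul_dotProduct, ← l2norm_sq, smul_eq_mul, smul_eq_mul, mul_pow,
    ← mul_assoc, ← sq]
  gcongr
  · exact Real.sqrt_nonneg _
  · exact hv _ hG

namespace Matrix

variable {ι : Type*} [Fintype ι]

theorem PosSemidef.sq_dotProduct_mulVec_le {Q : Matrix ι ι ℝ} (hQ : Q.PosSemidef) (x y : ι → ℝ) :
    (x ⬝ᵥ Q *ᵥ y) ^ 2 ≤ (x ⬝ᵥ Q *ᵥ x) * (y ⬝ᵥ Q *ᵥ y) := by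
  let _ := Q.toSeminormedAddCommGroup hQ
  let _ := Q.toInnerProductSpace hQ
  have hinner : ∀ a b : ι → ℝ, inner ℝ a b = a ⬝ᵥ Q *ᵥ b := fun a b => dotProduct_comm _ _
  simpa only [hinner, sq] using real_inner_mul_inner_self_le x y

theorem dotProduct_le_matNorm_inv_mul_matNorm [DecidableEq ι] {Q : Matrix ι ι ℝ} (hQ : Q.PosDef)
    (x y : ι → ℝ) : x ⬝ᵥ y ≤ matNorm Q⁻¹ x * matNorm Q y := by
  have hdet : IsUnit Q.det := hQ.det_pos.ne'.isUnit
  have hxy : x ⬝ᵥ y = x ⬝ᵥ Q⁻¹ *ᵥ (Q *ᵥ y) := by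
    rw [mulVec_mulVec, nonsing_inv_mul _ hdet, one_mulVec]
  have hyy : Q *ᵥ y ⬝ᵥ Q⁻¹ *ᵥ (Q *ᵥ y) = y ⬝ᵥ Q *ᵥ y := by
    rw [mulVec_mulVec, nonsing_inv_mul _ hdet, one_mulVec, dotProduct_comm]
  have hcs := hQ.inv.posSemidef.sq_dotProduct_mulVec_le x (Q *ᵥ y)
  rw [← hxy, hyy] at hcs
  have hx : 0 ≤ x ⬝ᵥ Q⁻¹ *ᵥ x := by simpa using hQ.inv.posSemidef.dotProduct_mulVec_nonneg x
  rw [matNorm, matNorm, ← Real.sqrt_mul hx]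
  exact (le_abs_self _).trans (Real.abs_le_sqrt hcs)

theorem dotProduct_sum_smul_vecMulVec_mulVec {κ : Type*} [Fintype κ] (c : κ → ℝ)
    (x : κ → ι → ℝ) (u : ι → ℝ) :
    u ⬝ᵥ (∑ p, c p • vecMulVec (x p) (x p)) *ᵥ u = ∑ p, c p * (x p ⬝ᵥ u) ^ 2 := by
  rw [sum_mulVec, dotProduct_sum]
  refine sum_congr rfl fun p _ => ?_
  simp only [smul_mulVec, vecMulVec_mulVec, op_smul_eq_smul, dotProduct_smul, smul_eq_mul]
  rw [dotProduct_comm u]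
  ring

theorem posSemidef_sum_smul_vecMulVec_self {κ : Type*} [Fintype κ] {c : κ → ℝ}
    (hc : ∀ p, 0 ≤ c p) (x : κ → ι → ℝ) : (∑ p, c p • vecMulVec (x p) (x p)).PosSemidef :=
  posSemidef_sum _ fun p _ => by simpa using (posSemidef_vecMulVec_self_star (x p)).smul (hc p)

variable [DecidableEq ι] {β : Type*} [Fintype β]

theorem sum_mul_sum_dotProduct_le {Q : Matrix ι ι ℝ} (hQ : Q.PosDef) {X : Type*} [Fintype X]
    {q : X → ℝ} (hq : ∀ x, 0 ≤ q x) (φ : X → ι → ℝ) (W : β → ι → ℝ) :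
    ∑ x, q x * ∑ b, φ x ⬝ᵥ W b ≤ (∑ x, q x * matNorm Q⁻¹ (φ x)) * ∑ b, matNorm Q (W b) := by
  simp only [sum_mul, mul_assoc]
  gcongr with x _
  · exact hq x
  rw [mul_sum]
  gcongr with b _
  exact dotProduct_le_matNorm_inv_mul_matNorm hQ _ _

theorem sum_matNorm_le {κ : Type*} [Fintype κ] {μ : κ → ℝ} (hμ : ∀ p, 0 ≤ μ p) (φ : κ → ι → ℝ)
    (n : ℕ) {lam : ℝ} (hlam : 0 ≤ lam) (W : β → ι → ℝ) {R E : ℝ} (hR : ∀ b, W b ⬝ᵥ W b ≤ R)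
    (hE : ∑ b, ∑ p, μ p * (φ p ⬝ᵥ W b) ^ 2 ≤ Fintype.card β * E) :
    ∑ b, matNorm ((n : ℝ) • (∑ p, μ p • vecMulVec (φ p) (φ p)) + lam • 1) (W b) ≤
      Fintype.card β * √(n * E + lam * R) := by
  set Q := (n : ℝ) • (∑ p, μ p • vecMulVec (φ p) (φ p)) + lam • (1 : Matrix ι ι ℝ)
  have hQ : Q.PosSemidef :=
    ((posSemidef_sum_smul_vecMulVec_self hμ φ).smul (Nat.cast_nonneg n)).add
      (PosSemidef.one.smul hlam)
  have hsq : ∀ b, matNorm Q (W b) ^ 2 =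
      n * ∑ p, μ p * (φ p ⬝ᵥ W b) ^ 2 + lam * (W b ⬝ᵥ W b) := by
    intro b
    rw [matNorm, Real.sq_sqrt (by simpa using hQ.dotProduct_mulVec_nonneg (W b))]
    simp only [Q, add_mulVec, smul_mulVec, dotProduct_add, dotProduct_smul, one_mulVec,
      dotProduct_sum_smul_vecMulVec_mulVec, smul_eq_mul]
  refine sum_le_card_mul_sqrt_of_sum_sq_le _ ?_
  calc ∑ b, matNorm Q (W b) ^ 2
      = n * ∑ b, ∑ p, μ p * (φ p ⬝ᵥ W b) ^ 2 + lam * ∑ b, W b ⬝ᵥ W b := by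
        simp only [hsq, sum_add_distrib, mul_sum]
    _ ≤ n * (Fintype.card β * E) + lam * ∑ _b : β, R := by gcongr with b; exact hR b
    _ = Fintype.card β * (n * E + lam * R) := by
        rw [sum_const, card_univ, nsmul_eq_mul]
        ring

end Matrix

theorem one_step_back_of_dotProduct_eq {κ : Type*} [Fintype κ] [DecidableEq κ] {A : κ → Type*}
    [∀ j, Fintype (A j)] [∀ j, Nonempty (A j)] (i : κ) {σ ι : Type*} [Fintype σ] [Fintype ι]
    [DecidableEq ι] {P : σ × (∀ j, A j) → σ → ℝ} (hPpos : ∀ p s, 0 ≤ P p s)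
    (hPsum : ∀ p, ∑ s, P p s = 1) (φ : σ × (∀ j, A j) → ι → ℝ) {G : σ → A i → ℝ}
    (hG : ∀ s b, 0 ≤ G s b) (W : A i → ι → ℝ) (hW : ∀ p b, φ p ⬝ᵥ W b = ∑ s, P p s * G s b)
    {R : ℝ} (hR : ∀ b, W b ⬝ᵥ W b ≤ R) {μ : σ × (∀ j, A j) → ℝ} (hμ : ∀ p, 0 ≤ μ p) (n : ℕ)
    {lam : ℝ} (hlam : 0 < lam) {ν : σ × (∀ j, A j) → ℝ}
    (hν : ∀ p, ν p = 1 / Fintype.card (∀ j, A j) * ∑ p', μ p' * P p' p.1)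
    {q' : σ × (∀ j, A j) → ℝ} (hq' : ∀ p, 0 ≤ q' p) {π : σ → (∀ j, A j) → ℝ}
    (hπ : ∀ s a, 0 ≤ π s a) (hπ1 : ∀ s, ∑ a, π s a = 1) :
    ∑ p : σ × (∀ j, A j), (∑ p', q' p' * P p' p.1 * π p.1 p.2) * G p.1 (p.2 i) ≤
      (Fintype.card (A i) : ℝ) *
        (∑ p, q' p * matNorm ((n : ℝ) • (∑ x, μ x • vecMulVec (φ x) (φ x)) + lam • 1)⁻¹ (φ p)) *
          √(n * ∑ p, ν p * G p.1 (p.2 i) ^ 2 + lam * R) := by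
  set Q := (n : ℝ) • (∑ x, μ x • vecMulVec (φ x) (φ x)) + lam • (1 : Matrix ι ι ℝ)
  have hQ : Q.PosDef := PosDef.posSemidef_add
    ((posSemidef_sum_smul_vecMulVec_self hμ φ).smul (Nat.cast_nonneg n)) (PosDef.one.smul hlam)
  have hE : ∑ b, ∑ p, μ p * (φ p ⬝ᵥ W b) ^ 2 ≤
      Fintype.card (A i) * ∑ p, ν p * G p.1 (p.2 i) ^ 2 := by
    rw [← sum_sum_mul_sum_eq_card_mul_sum_mul_comp_eval μ P hν i fun s b => G s b ^ 2]
    gcongr with b _ p _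
    · exact hμ p
    · rw [hW]
      exact sq_sum_mul_le_sum_mul_sq_s3 _ (fun s _ => hPpos p s) (hPsum p) _
  calc ∑ p : σ × (∀ j, A j), (∑ p', q' p' * P p' p.1 * π p.1 p.2) * G p.1 (p.2 i)
      ≤ ∑ p, q' p * ∑ b, ∑ s, P p s * G s b :=
        sum_next_mul_le hq' hPpos hπ hπ1 (fun a => a i) hG
    _ = ∑ p, q' p * ∑ b, φ p ⬝ᵥ W b := by simp only [hW]
    _ ≤ (∑ p, q' p * matNorm Q⁻¹ (φ p)) * ∑ b, matNorm Q (W b) :=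
        sum_mul_sum_dotProduct_le hQ hq' φ W
    _ ≤ (∑ p, q' p * matNorm Q⁻¹ (φ p)) *
          (Fintype.card (A i) * √(n * ∑ p, ν p * G p.1 (p.2 i) ^ 2 + lam * R)) := by
        gcongr
        · exact sum_nonneg fun p _ => mul_nonneg (hq' p) (Real.sqrt_nonneg _)
        · exact sum_matNorm_le hμ φ n hlam.le W hR hE
    _ = _ := by ring

theorem one_step_back_factored_general
    {M : ℕ}
    (S : Fin M → Type*) [∀ j, Fintype (S j)]
    (A : Fin M → Type*) [∀ j, Fintype (A j)] [∀ j, Nonempty (A j)]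
    {d n : ℕ}
    {lam B : ℝ} (hlam : 0 < lam) (hB : 0 < B)
    (Z : Fin M → Finset (Fin M))
    (φ : (j : Fin M) → ((k : {k // k ∈ Z j}) → S k.1) → A j → Fin d → ℝ)
    (w : (j : Fin M) → S j → Fin d → ℝ)
    (Ploc : (j : Fin M) → ((k : {k // k ∈ Z j}) → S k.1) → A j → S j → ℝ)
    (hPloc : ∀ j zs a s', Ploc j zs a s' = ∑ m, φ j zs a m * w j s' m)
    (hPlocpos : ∀ j zs a s', 0 ≤ Ploc j zs a s')
    (hPlocsum : ∀ j zs a, ∑ s', Ploc j zs a s' = 1)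
    (P : (((j : Fin M) → S j) × ((j : Fin M) → A j)) → ((j : Fin M) → S j) → ℝ)
    (hP : ∀ p s', P p s' = ∏ j, Ploc j (fun k => p.1 k.1) (p.2 j) (s' j))
    (i : Fin M)
    (hw : ∀ G : ((k : {k // k ∈ Z i}) → S k.1) → ℝ,
      (∀ z, G z ∈ Set.Icc (0 : ℝ) 1) →
      l2norm (fun k : ({j // j ∈ Z i} → Fin d) =>
        ∑ z : (j : {j // j ∈ Z i}) → S j.1,
          (∏ j : {j // j ∈ Z i}, w j.1 (z j) (k j)) * G z) ≤
        Real.sqrt ((d : ℝ) ^ (Z i).card))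
    (φbar : (((j : Fin M) → S j) × ((j : Fin M) → A j)) → ({j // j ∈ Z i} → Fin d) → ℝ)
    (hφbar : ∀ p k, φbar p k = ∏ j : {j // j ∈ Z i},
      φ j.1 (fun k' => p.1 k'.1) (p.2 j.1) (k j))
    (μ : (((j : Fin M) → S j) × ((j : Fin M) → A j)) → ℝ)
    (hμpos : ∀ p, 0 ≤ μ p)
    (Sigb : Matrix ({j // j ∈ Z i} → Fin d) ({j // j ∈ Z i} → Fin d) ℝ)
    (hSigb : Sigb = (n : ℝ) • (∑ p, μ p • vecMulVec (φbar p) (φbar p)) +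
      lam • (1 : Matrix ({j // j ∈ Z i} → Fin d) ({j // j ∈ Z i} → Fin d) ℝ))
    (ν : (((j : Fin M) → S j) × ((j : Fin M) → A j)) → ℝ)
    (hν : ∀ p, ν p = (1 / (Fintype.card ((j : Fin M) → A j) : ℝ)) * ∑ p', μ p' * P p' p.1)
    (q' : (((j : Fin M) → S j) × ((j : Fin M) → A j)) → ℝ)
    (hq'pos : ∀ p, 0 ≤ q' p)
    (pol : ((j : Fin M) → S j) → ((j : Fin M) → A j) → ℝ)
    (hpolpos : ∀ s a, 0 ≤ pol s a) (hpolsum : ∀ s, ∑ a, pol s a = 1)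
    (q : (((j : Fin M) → S j) × ((j : Fin M) → A j)) → ℝ)
    (hq : ∀ p, q p = ∑ p', q' p' * P p' p.1 * pol p.1 p.2)
    (g : (((k : {k // k ∈ Z i}) → S k.1) × A i) → ℝ)
    (hg : ∀ x, g x ∈ Set.Icc (0 : ℝ) B) :
    (∑ p, q p * g (fun k => p.1 k.1, p.2 i)) ≤
      (Fintype.card (A i) : ℝ) *
        (∑ p, q' p * matNorm Sigb⁻¹ (φbar p)) *
          Real.sqrt ((n : ℝ) * (∑ p, ν p * g (fun k => p.1 k.1, p.2 i) ^ 2)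
            + B ^ 2 * lam * (d : ℝ) ^ (Z i).card) := by
  have hPpos : ∀ p s', 0 ≤ P p s' := fun p s' =>
    (hP p s').symm ▸ prod_nonneg fun j _ => hPlocpos _ _ _ _
  have hPsum : ∀ p, ∑ s', P p s' = 1 := fun p => by
    simp only [hP, ← Fintype.prod_sum, hPlocsum, prod_const_one]
  set W : A i → ({j // j ∈ Z i} → Fin d) → ℝ :=
    fun b k => ∑ z, (∏ j : {j // j ∈ Z i}, w j.1 (z j) (k j)) * g (z, b)
  have hWW : ∀ b, W b ⬝ᵥ W b ≤ B ^ 2 * (d : ℝ) ^ (Z i).card := fun b =>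
    (dotProduct_self_le_of_l2norm_le _ hB hw fun z => hg (z, b)).trans_eq
      (by rw [mul_pow, Real.sq_sqrt (by positivity)])
  have hW : ∀ p b, φbar p ⬝ᵥ W b = ∑ s', P p s' * g (fun k => s' k.1, b) := by
    intro p b
    have hφbar' : φbar p = kronProd fun j : {j // j ∈ Z i} =>
        φ j.1 (fun k' => p.1 k'.1) (p.2 j.1) := funext (hφbar p)
    simp only [hP, hφbar']
    exact (sum_prod_mul_comp_restrict_eq_kronProd_dotProduct (Z i)
      (fun j => Ploc j (fun k => p.1 k.1) (p.2 j)) (fun j _ => hPlocsum _ _ _) _ (fun j => w j.1)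
      (fun j x => hPloc _ _ _ _) fun z => g (z, b)).symm
  have key := one_step_back_of_dotProduct_eq i hPpos hPsum φbar (fun s b => (hg _).1) W hW hWW
    hμpos n hlam hν hq'pos hpolpos hpolsum
  simp only [hq, hSigb]
  convert key using 3
  ring

/-- One-step back inequality for low-rank factored Markov games. -/
theorem one_step_back_factored
    {M : ℕ} (hM : 1 ≤ M)
    (S : Fin M → Type*) [∀ j, Fintype (S j)] [∀ j, Nonempty (S j)]
    (A : Fin M → Type*) [∀ j, Fintype (A j)] [∀ j, Nonempty (A j)]
    {d n : ℕ} (hd : 1 ≤ d) (hn : 1 ≤ n)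
    {lam B : ℝ} (hlam : 0 < lam) (hB : 0 < B)
    (Z : Fin M → Finset (Fin M))
    (φ : (j : Fin M) → ((k : {k // k ∈ Z j}) → S k.1) → A j → Fin d → ℝ)
    (hφ : ∀ j zs a, l2norm (φ j zs a) ≤ 1)
    (w : (j : Fin M) → S j → Fin d → ℝ)
    (Ploc : (j : Fin M) → ((k : {k // k ∈ Z j}) → S k.1) → A j → S j → ℝ)
    (hPloc : ∀ j zs a s', Ploc j zs a s' = ∑ m, φ j zs a m * w j s' m)
    (hPlocpos : ∀ j zs a s', 0 ≤ Ploc j zs a s')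
    (hPlocsum : ∀ j zs a, ∑ s', Ploc j zs a s' = 1)
    (P : (((j : Fin M) → S j) × ((j : Fin M) → A j)) → ((j : Fin M) → S j) → ℝ)
    (hP : ∀ p s', P p s' = ∏ j, Ploc j (fun k => p.1 k.1) (p.2 j) (s' j))
    (i : Fin M)
    (hw : ∀ G : ((k : {k // k ∈ Z i}) → S k.1) → ℝ,
      (∀ z, G z ∈ Set.Icc (0 : ℝ) 1) →
      l2norm (fun k : ({j // j ∈ Z i} → Fin d) =>
        ∑ z : (j : {j // j ∈ Z i}) → S j.1,
          (∏ j : {j // j ∈ Z i}, w j.1 (z j) (k j)) * G z) ≤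
        Real.sqrt ((d : ℝ) ^ (Z i).card))
    (φbar : (((j : Fin M) → S j) × ((j : Fin M) → A j)) → ({j // j ∈ Z i} → Fin d) → ℝ)
    (hφbar : ∀ p k, φbar p k = ∏ j : {j // j ∈ Z i},
      φ j.1 (fun k' => p.1 k'.1) (p.2 j.1) (k j))
    (μ : (((j : Fin M) → S j) × ((j : Fin M) → A j)) → ℝ)
    (hμpos : ∀ p, 0 ≤ μ p) (hμsum : ∑ p, μ p = 1)
    (Sigb : Matrix ({j // j ∈ Z i} → Fin d) ({j // j ∈ Z i} → Fin d) ℝ)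
    (hSigb : Sigb = (n : ℝ) • (∑ p, μ p • vecMulVec (φbar p) (φbar p)) +
      lam • (1 : Matrix ({j // j ∈ Z i} → Fin d) ({j // j ∈ Z i} → Fin d) ℝ))
    (ν : (((j : Fin M) → S j) × ((j : Fin M) → A j)) → ℝ)
    (hν : ∀ p, ν p = (1 / (Fintype.card ((j : Fin M) → A j) : ℝ)) * ∑ p', μ p' * P p' p.1)
    (q' : (((j : Fin M) → S j) × ((j : Fin M) → A j)) → ℝ)
    (hq'pos : ∀ p, 0 ≤ q' p) (hq'sum : ∑ p, q' p = 1)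
    (pol : ((j : Fin M) → S j) → ((j : Fin M) → A j) → ℝ)
    (hpolpos : ∀ s a, 0 ≤ pol s a) (hpolsum : ∀ s, ∑ a, pol s a = 1)
    (q : (((j : Fin M) → S j) × ((j : Fin M) → A j)) → ℝ)
    (hq : ∀ p, q p = ∑ p', q' p' * P p' p.1 * pol p.1 p.2)
    (g : (((k : {k // k ∈ Z i}) → S k.1) × A i) → ℝ)
    (hg : ∀ x, g x ∈ Set.Icc (0 : ℝ) B) :
    (∑ p, q p * g (fun k => p.1 k.1, p.2 i)) ≤
      (Fintype.card (A i) : ℝ) *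
        (∑ p, q' p * matNorm Sigb⁻¹ (φbar p)) *
          Real.sqrt ((n : ℝ) * (∑ p, ν p * g (fun k => p.1 k.1, p.2 i) ^ 2)
            + B ^ 2 * lam * (d : ℝ) ^ (Z i).card) :=
  one_step_back_factored_general S A hlam hB Z φ w Ploc hPloc hPlocpos hPlocsum P hP i hw φbar hφbar
    μ hμpos Sigb hSigb ν hν q' hq'pos pol hpolpos hpolsum q hq g hg
end
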